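/- arXiv:0912.1154 — 3 statements merged into one kernel-verified Lean document; each statement's English description precedes it below -/
import Mathlib

section
/- Let A be a symmetric unbounded operator on a Hilbert space H₀ with dense domain H₁ ⊆ H₀ such that A : H₁ → H₀ is Fredholm of index 0. Then A is self-adjoint, i.e., the domain of the adjoint A* equals H₁ and A* = A on H₁. -/
open scoped RealInnerProductSpace

/-!
Symmetry puts `ker A` inside `(range A)ᗮ`, and index zero makes the inclusion an equality, so
`H₀ = range A ⊕ ker A` once the range is closed. If `v` has adjoint vector `A* v = A u + m`
with `A m = 0`, then `A* (v - u) = m`, and pairing with `m` itself gives `‖m‖² = ⟪v - u, A m⟫ = 0`.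
Hence `v - u ⊥ range A`, i.e. `v - u ∈ ker A ⊆ H₁`, so `v ∈ H₁`.
-/

namespace LinearMap

variable {E : Type*} [NormedAddCommGroup E] [InnerProductSpace ℝ E] {D : Submodule ℝ E}
  (A : D →ₗ[ℝ] E)

theorem map_ker_le_orthogonal_range (hsym : ∀ ξ η : D, ⟪(ξ : E), A η⟫ = ⟪A ξ, (η : E)⟫) :
    (ker A).map D.subtype ≤ (range A)ᗮ := by
  rintro _ ⟨m, hm, rfl⟩ _ ⟨w, rfl⟩
  rw [real_inner_comm, Submodule.subtype_apply, hsym, mem_ker.mp hm, inner_zero_left]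

theorem map_ker_eq_orthogonal_range
    (hsym : ∀ ξ η : D, ⟪(ξ : E), A η⟫ = ⟪A ξ, (η : E)⟫)
    [FiniteDimensional ℝ (range A)ᗮ]
    (hind : Module.finrank ℝ (ker A) = Module.finrank ℝ (range A)ᗮ) :
    (ker A).map D.subtype = (range A)ᗮ := by
  refine Submodule.eq_of_le_of_finrank_eq (map_ker_le_orthogonal_range A hsym) ?_
  rw [← hind]
  exact (Submodule.equivMapOfInjective _ D.injective_subtype _).symm.finrank_eq

theorem mem_of_forall_inner_eq_inner_apply
    (hsym : ∀ ξ η : D, ⟪(ξ : E), A η⟫ = ⟪A ξ, (η : E)⟫)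
    [(range A).HasOrthogonalProjection] (horth : (range A)ᗮ ≤ (ker A).map D.subtype)
    {v y : E} (hy : ∀ w : D, ⟪y, (w : E)⟫ = ⟪v, A w⟫) : v ∈ D := by
  obtain ⟨_, ⟨u, rfl⟩, m, hm, rfl⟩ := (range A).exists_add_mem_mem_orthogonal y
  have hvu : ∀ w : D, ⟪m, (w : E)⟫ = ⟪v - u, A w⟫ := fun w => by
    rw [inner_sub_left, ← hy, hsym, inner_add_left, add_sub_cancel_left]
  obtain ⟨m', hm', rfl⟩ := horth hm
  rw [Submodule.subtype_apply] at hvu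
  have hm_zero : (m' : E) = 0 := by
    simpa [mem_ker.mp hm'] using hvu m'
  have hvu_perp : v - u ∈ (range A)ᗮ := by
    rintro _ ⟨w, rfl⟩
    rw [real_inner_comm, ← hvu, hm_zero, inner_zero_left]
  obtain ⟨k, -, hk⟩ := horth hvu_perp
  rw [← sub_add_cancel v u, ← hk]
  exact D.add_mem k.2 u.2

end LinearMap

theorem stmt_1_general {H₀ : Type*} [NormedAddCommGroup H₀] [InnerProductSpace ℝ H₀]
    [CompleteSpace H₀] (H₁ : Submodule ℝ H₀) (hdense : Dense (H₁ : Set H₀))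
    (A : H₁ →ₗ[ℝ] H₀)
    (hsym : ∀ ξ η : H₁, ⟪(ξ : H₀), A η⟫ = ⟪A ξ, (η : H₀)⟫)
    (hclosed : IsClosed ((LinearMap.range A : Submodule ℝ H₀) : Set H₀))
    (hcoker : FiniteDimensional ℝ ((LinearMap.range A)ᗮ : Submodule ℝ H₀))
    (hind : Module.finrank ℝ (LinearMap.ker A)
      = Module.finrank ℝ ((LinearMap.range A)ᗮ : Submodule ℝ H₀)) :
    (∀ v : H₀, (∃ y : H₀, ∀ w : H₁, ⟪y, (w : H₀)⟫ = ⟪v, A w⟫) ↔ v ∈ H₁) ∧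
    (∀ (v : H₁) (y : H₀), (∀ w : H₁, ⟪y, (w : H₀)⟫ = ⟪(v : H₀), A w⟫) → y = A v) := by
  have : CompleteSpace (LinearMap.range A) := hclosed.completeSpace_coe
  have hker_eq := A.map_ker_eq_orthogonal_range hsym hind
  refine ⟨fun v => ⟨fun ⟨y, hy⟩ => A.mem_of_forall_inner_eq_inner_apply hsym hker_eq.ge hy,
    fun hv => ⟨A ⟨v, hv⟩, fun w => by rw [← hsym, real_inner_comm]⟩⟩, fun v y hy => ?_⟩
  refine hdense.eq_of_inner_left ℝ fun w hw => ?_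
  rw [hy ⟨w, hw⟩, hsym]

/-- A symmetric densely defined operator `A : H₁ → H₀` which is
Fredholm of index 0 is self-adjoint: the domain of the adjoint `A*` equals `H₁`
(a vector `v` admits an adjoint vector `y` iff `v ∈ H₁`), and on `H₁` the
adjoint is given by `A` itself. -/
theorem stmt_1 {H₀ : Type*} [NormedAddCommGroup H₀] [InnerProductSpace ℝ H₀]
    [CompleteSpace H₀] (H₁ : Submodule ℝ H₀) (hdense : Dense (H₁ : Set H₀))
    (A : H₁ →ₗ[ℝ] H₀)
    (hsym : ∀ ξ η : H₁, ⟪(ξ : H₀), A η⟫ = ⟪A ξ, (η : H₀)⟫)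
    (hker : FiniteDimensional ℝ (LinearMap.ker A))
    (hclosed : IsClosed ((LinearMap.range A : Submodule ℝ H₀) : Set H₀))
    (hcoker : FiniteDimensional ℝ ((LinearMap.range A)ᗮ : Submodule ℝ H₀))
    (hind : Module.finrank ℝ (LinearMap.ker A)
      = Module.finrank ℝ ((LinearMap.range A)ᗮ : Submodule ℝ H₀)) :
    (∀ v : H₀, (∃ y : H₀, ∀ w : H₁, ⟪y, (w : H₀)⟫ = ⟪v, A w⟫) ↔ v ∈ H₁) ∧
    (∀ (v : H₁) (y : H₀), (∀ w : H₁, ⟪y, (w : H₀)⟫ = ⟪(v : H₀), A w⟫) → y = A v) :=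
  stmt_1_general H₁ hdense A hsym hclosed hcoker hind
end

section
/- Let A be a symmetric unbounded operator on H₀ with dense domain H₁, Fredholm of index 0. Then every v ∈ dom(A*) can be written as v = η + κ with η ∈ H₁ and κ ∈ ker(A); in particular dom(A*) ⊆ H₁. -/
open scoped RealInnerProductSpace

/-- For a symmetric densely defined operator `A : H₁ → H₀` which is
Fredholm of index 0, every `v ∈ dom(A*)` decomposes as `v = η + κ` with `η ∈ H₁`
and `κ ∈ ker A`; in particular `dom(A*) ⊆ H₁`. -/
theorem stmt_2 {H₀ : Type*} [NormedAddCommGroup H₀] [InnerProductSpace ℝ H₀]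
    [CompleteSpace H₀] (H₁ : Submodule ℝ H₀) (hdense : Dense (H₁ : Set H₀))
    (A : H₁ →ₗ[ℝ] H₀)
    (hsym : ∀ ξ η : H₁, ⟪(ξ : H₀), A η⟫ = ⟪A ξ, (η : H₀)⟫)
    (hker : FiniteDimensional ℝ (LinearMap.ker A))
    (hclosed : IsClosed ((LinearMap.range A : Submodule ℝ H₀) : Set H₀))
    (hcoker : FiniteDimensional ℝ ((LinearMap.range A)ᗮ : Submodule ℝ H₀))
    (hind : Module.finrank ℝ (LinearMap.ker A)
      = Module.finrank ℝ ((LinearMap.range A)ᗮ : Submodule ℝ H₀)) :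
    ∀ v : H₀, (∃ y : H₀, ∀ w : H₁, ⟪y, (w : H₀)⟫ = ⟪v, A w⟫) →
      (∃ η κ : H₀, η ∈ H₁ ∧ κ ∈ (LinearMap.ker A).map H₁.subtype ∧ v = η + κ) ∧
      v ∈ H₁ := by
  rintro v ⟨y, hy⟩
  -- Step 1: image of ker A is contained in (range A)ᗮ
  have hle : (LinearMap.ker A).map H₁.subtype ≤ (LinearMap.range A)ᗮ := by
    rintro _ ⟨κ, hκ, rfl⟩
    rw [Submodule.mem_orthogonal]
    rintro _ ⟨w, rfl⟩
    simp only [Submodule.coe_subtype]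
    rw [real_inner_comm, hsym, LinearMap.mem_ker.mp hκ, inner_zero_left]
  -- Step 2: equality by comparing finranks
  have hfr : Module.finrank ℝ ((LinearMap.ker A).map H₁.subtype)
      = Module.finrank ℝ ((LinearMap.range A)ᗮ : Submodule ℝ H₀) := by
    rw [← hind]
    exact (Submodule.equivMapOfInjective _ (Submodule.injective_subtype H₁)
      (LinearMap.ker A)).finrank_eq.symm
  haveI : FiniteDimensional ℝ ((LinearMap.ker A).map H₁.subtype) :=
    Submodule.finiteDimensional_of_le hle
  have heq : (LinearMap.ker A).map H₁.subtype = (LinearMap.range A)ᗮ :=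
    Submodule.eq_of_le_of_finrank_eq hle hfr
  -- Step 3: y ∈ range A
  haveI : CompleteSpace (LinearMap.range A : Submodule ℝ H₀) := hclosed.completeSpace_coe
  have hy_mem : y ∈ LinearMap.range A := by
    rw [← Submodule.orthogonal_orthogonal (LinearMap.range A), Submodule.mem_orthogonal]
    intro u hu
    rw [← heq] at hu
    obtain ⟨κ, hκ, rfl⟩ := hu
    simp only [Submodule.coe_subtype]
    rw [real_inner_comm, hy, LinearMap.mem_ker.mp hκ, inner_zero_right]
  obtain ⟨ξ, hξ⟩ := hy_mem
  -- Step 4: v - ξ ⊥ range A, hence in (image of) ker A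
  have hperp : v - (ξ : H₀) ∈ (LinearMap.range A)ᗮ := by
    rw [Submodule.mem_orthogonal]
    rintro _ ⟨w, rfl⟩
    rw [real_inner_comm, inner_sub_left, ← hy, hsym, hξ, sub_self]
  rw [← heq] at hperp
  have hmem : v - (ξ : H₀) ∈ H₁ := by
    obtain ⟨κ, _, hκ⟩ := hperp
    exact hκ ▸ κ.2
  refine ⟨⟨(ξ : H₀), v - ξ, ξ.2, hperp, by abel⟩, ?_⟩
  have := H₁.add_mem ξ.2 hmem
  simpa using this
end

section
/- Let A be a scale Hessian operator on a scale Hilbert space H = {H_k}. Then the restriction of A to H^2, i.e., A : H₂ → H₁, is a scale Hessian operator on the shifted scale Hilbert space H¹ = {H_{k+1}}: it is symmetric with respect to a scalar product equivalent to ⟨·,·⟩₁ (namely the graph inner product), Fredholm of index 0 as a map H₂ → H₁, and satisfies the regularity axiom. -/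
open scoped RealInnerProductSpace
open Filter

section ScaleSetup

variable (H : ℕ → Type*) [∀ k, NormedAddCommGroup (H k)]
  [∀ k, InnerProductSpace ℝ (H k)] [∀ k, CompleteSpace (H k)]
  (incl : ∀ k, H (k + 1) →L[ℝ] H k)

/-- The composite inclusion `H_{k+j} → H_k`. -/
noncomputable def chain : (k j : ℕ) → H (k + j) →L[ℝ] H k
  | k, 0 => ContinuousLinearMap.id ℝ (H k)
  | k, j + 1 => (chain k j).comp (incl (k + j))

/-- The composite inclusion `H_n → H_0`. -/
noncomputable def toBase : (n : ℕ) → H n →L[ℝ] H 0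
  | 0 => ContinuousLinearMap.id ℝ (H 0)
  | n + 1 => (toBase n).comp (incl n)

/-- The composite inclusion `H_{n+1} → H_1`. -/
noncomputable def toOne : (n : ℕ) → H (n + 1) →L[ℝ] H 1
  | 0 => ContinuousLinearMap.id ℝ (H 1)
  | n + 1 => (toOne n).comp (incl (n + 1))

/-- The composite inclusion `H_{n+2} → H_2`. -/
noncomputable def toTwo : (n : ℕ) → H (n + 2) →L[ℝ] H 2
  | 0 => ContinuousLinearMap.id ℝ (H 2)
  | n + 1 => (toTwo n).comp (incl (n + 2))

/-- A scale Hilbert space: a nested sequence of Hilbert spaces (given by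
injective inclusion maps) with compact inclusions and with the common
intersection `H_∞` dense in each level. -/
def IsScaleHilbert : Prop :=
  (∀ k, Function.Injective (incl k)) ∧
  (∀ k, IsCompactOperator (incl k)) ∧
  (∀ k, Dense (⋂ j, Set.range (chain H incl k j)))

/-- A scale Hessian operator on a scale Hilbert space: a family of bounded
operators `A_k : H_{k+1} → H_k` compatible with the inclusions such that
`A_0 : H_1 → H_0` is symmetric w.r.t. `⟨·,·⟩₀`, Fredholm of index 0, and
regular: `ξ ∈ H_1`, `A ξ ∈ H_n` imply `ξ ∈ H_{n+1}`. -/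
def IsScaleHessian (A : ∀ k, H (k + 2) →L[ℝ] H (k + 1)) (A₀ : H 1 →L[ℝ] H 0) :
    Prop :=
  ((incl 0).comp (A 0) = A₀.comp (incl 1)) ∧
  (∀ k, (incl (k + 1)).comp (A (k + 1)) = (A k).comp (incl (k + 2))) ∧
  (∀ ξ η : H 1, ⟪incl 0 ξ, A₀ η⟫ = ⟪A₀ ξ, incl 0 η⟫) ∧
  FiniteDimensional ℝ (LinearMap.ker (A₀ : H 1 →ₗ[ℝ] H 0)) ∧
  IsClosed ((LinearMap.range (A₀ : H 1 →ₗ[ℝ] H 0) : Submodule ℝ (H 0)) : Set (H 0)) ∧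
  (Module.finrank ℝ (LinearMap.ker (A₀ : H 1 →ₗ[ℝ] H 0)) =
    Module.finrank ℝ ((LinearMap.range (A₀ : H 1 →ₗ[ℝ] H 0))ᗮ : Submodule ℝ (H 0))) ∧
  (∀ (ξ : H 1) (n : ℕ) (η : H n), toBase H incl n η = A₀ ξ →
    ∃ ζ : H (n + 1), toOne H incl n ζ = ξ)

end ScaleSetup

open Module Function

/-! Regularity at level one ties `A₁ : H₂ → H₁` to `A₀`: the inclusion `H₂ → H₁` maps `ker A₁`
onto `ker A₀`, and `ran A₁` is the preimage of the closed subspace `ran A₀` under `H₁ → H₀`. Hence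
`H₁ ⧸ ran A₁` embeds into `H₀ ⧸ ran A₀` with dense image, because `H₁` is dense in `H₀`; a dense
subspace has the dimension of the ambient space (finite-dimensional subspaces are closed), so the
cokernels have equal dimension. The graph norm is equivalent to `‖·‖₁` by splitting `a ∈ H₁` along
`ker A₀ ⊕ (ker A₀)ᗮ`: by the open mapping theorem `A₀` is bounded below on `(ker A₀)ᗮ`, and the
injective inclusion `H₁ → H₀` is bounded below on the finite-dimensional `ker A₀`. -/

theorem Submodule.finrank_eq_of_dense {𝕜 E : Type*} [NontriviallyNormedField 𝕜] [CompleteSpace 𝕜]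
    [AddCommGroup E] [TopologicalSpace E] [IsTopologicalAddGroup E] [Module 𝕜 E]
    [ContinuousSMul 𝕜 E] [T2Space E] (S : Submodule 𝕜 E) (hS : Dense (S : Set E)) :
    finrank 𝕜 S = finrank 𝕜 E := by
  by_cases hfin : FiniteDimensional 𝕜 S
  · have hS_top : S = ⊤ := by
      rw [← S.closed_of_finiteDimensional.submodule_topologicalClosure_eq,
        Submodule.dense_iff_topologicalClosure_eq_top.mp hS]
    rw [hS_top, finrank_top]
  · rw [finrank_of_infinite_dimensional hfin, finrank_of_infinite_dimensional]
    intro hE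
    exact hfin inferInstance

section GraphNorm

variable {E F G : Type*} [NormedAddCommGroup E] [InnerProductSpace ℝ E] [CompleteSpace E]
  [NormedAddCommGroup F] [NormedSpace ℝ F] [CompleteSpace F]
  [NormedAddCommGroup G] [NormedSpace ℝ G]

theorem ContinuousLinearMap.exists_antilipschitzWith_comp_orthogonal_ker (f : E →L[ℝ] F)
    (hf : IsClosed (LinearMap.range (f : E →ₗ[ℝ] F) : Set F)) :
    ∃ K, AntilipschitzWith K (f ∘L (LinearMap.ker (f : E →ₗ[ℝ] F))ᗮ.subtypeL) := by
  set N := LinearMap.ker (f : E →ₗ[ℝ] F)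
  apply ContinuousLinearMap.antilipschitz_of_injective_of_isClosed_range
  · rw [← ContinuousLinearMap.coe_coe, ← LinearMap.ker_eq_bot]
    exact (Submodule.disjoint_iff_comap_eq_bot).mp N.orthogonal_disjoint.symm
  · convert hf using 1
    rw [LinearMap.coe_range]
    refine (Set.range_comp_subset_range (f := Nᗮ.subtypeL) (g := f)).antisymm ?_
    rintro _ ⟨x, rfl⟩
    refine ⟨⟨x - N.starProjection x, N.sub_starProjection_mem_orthogonal x⟩, ?_⟩
    have : f (N.starProjection x) = 0 := N.starProjection_apply_mem x
    simp [this]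

theorem exists_norm_le_of_finiteDimensional_ker (f : E →L[ℝ] F) (g : E →L[ℝ] G)
    (hg : Injective g) [FiniteDimensional ℝ (LinearMap.ker (f : E →ₗ[ℝ] F))]
    (hf : IsClosed (LinearMap.range (f : E →ₗ[ℝ] F) : Set F)) :
    ∃ C, ∀ x, ‖x‖ ≤ C * (‖g x‖ + ‖f x‖) := by
  set N := LinearMap.ker (f : E →ₗ[ℝ] F)
  obtain ⟨Kf, hKf⟩ := f.exists_antilipschitzWith_comp_orthogonal_ker hf
  obtain ⟨Kg, -, hKg⟩ := ((g : E →ₗ[ℝ] G) ∘ₗ N.subtype).exists_antilipschitzWith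
    (LinearMap.ker_eq_bot.mpr (hg.comp Subtype.val_injective))
  refine ⟨Kg + (Kg * ‖g‖ + 1) * Kf, fun x => ?_⟩
  set k := N.starProjection x
  set w : Nᗮ := ⟨x - k, N.sub_starProjection_mem_orthogonal x⟩
  have hw : ‖(w : E)‖ ≤ Kf * ‖f x‖ := by
    have hfk : f k = 0 := N.starProjection_apply_mem x
    simpa [w, hfk] using hKf.le_mul_norm (map_zero _) w
  have hk : ‖k‖ ≤ Kg * ‖g k‖ := hKg.le_mul_norm (map_zero _) ⟨k, N.starProjection_apply_mem x⟩
  have hgk : ‖g k‖ ≤ ‖g x‖ + ‖g‖ * ‖(w : E)‖ := by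
    have : g k = g x - g w := by simp [w]
    rw [this]
    exact (norm_sub_le _ _).trans (add_le_add_right (g.le_opNorm _) _)
  calc ‖x‖ = ‖k + w‖ := by simp [w]
    _ ≤ ‖k‖ + ‖(w : E)‖ := norm_add_le _ _
    _ ≤ Kg * (‖g x‖ + ‖g‖ * ‖(w : E)‖) + ‖(w : E)‖ := by gcongr; exact hk.trans (by gcongr)
    _ = Kg * ‖g x‖ + (Kg * ‖g‖ + 1) * ‖(w : E)‖ := by ring
    _ ≤ Kg * ‖g x‖ + (Kg * ‖g‖ + 1) * (Kf * ‖f x‖) := by gcongr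
    _ ≤ (Kg + (Kg * ‖g‖ + 1) * Kf) * (‖g x‖ + ‖f x‖) := by
      have : 0 ≤ Kg * ‖f x‖ + (Kg * ‖g‖ + 1) * Kf * ‖g x‖ := by positivity
      linarith

theorem exists_graph_norm_sq_equiv (f : E →L[ℝ] F) (g : E →L[ℝ] G)
    (hg : Injective g) [FiniteDimensional ℝ (LinearMap.ker (f : E →ₗ[ℝ] F))]
    (hf : IsClosed (LinearMap.range (f : E →ₗ[ℝ] F) : Set F)) :
    ∃ c C : ℝ, 0 < c ∧ 0 < C ∧ ∀ x,
      c * ‖x‖ ^ 2 ≤ ‖g x‖ ^ 2 + ‖f x‖ ^ 2 ∧ ‖g x‖ ^ 2 + ‖f x‖ ^ 2 ≤ C * ‖x‖ ^ 2 := by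
  obtain ⟨C, hC⟩ := exists_norm_le_of_finiteDimensional_ker f g hg hf
  refine ⟨(2 * C ^ 2 + 1)⁻¹, ‖g‖ ^ 2 + ‖f‖ ^ 2 + 1, by positivity, by positivity,
    fun x => ⟨?_, ?_⟩⟩
  · rw [inv_mul_le_iff₀ (by positivity)]
    have hsq : ‖x‖ ^ 2 ≤ C ^ 2 * (‖g x‖ + ‖f x‖) ^ 2 := by
      rw [← mul_pow]; exact pow_le_pow_left₀ (norm_nonneg x) (hC x) 2
    nlinarith [sq_nonneg (‖g x‖ - ‖f x‖), sq_nonneg C, sq_nonneg (‖g x‖ + ‖f x‖)]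
  · have hgx := pow_le_pow_left₀ (norm_nonneg _) (g.le_opNorm x) 2
    have hfx := pow_le_pow_left₀ (norm_nonneg _) (f.le_opNorm x) 2
    rw [mul_pow] at hgx hfx
    nlinarith [sq_nonneg ‖x‖]

end GraphNorm

section Restriction

variable {E₀ E₁ E₂ : Type*} [NormedAddCommGroup E₀] [InnerProductSpace ℝ E₀]
  [NormedAddCommGroup E₁] [InnerProductSpace ℝ E₁] [NormedAddCommGroup E₂] [NormedSpace ℝ E₂]
  {i₀ : E₁ →L[ℝ] E₀} {i₁ : E₂ →L[ℝ] E₁} {T : E₁ →L[ℝ] E₀} {S : E₂ →L[ℝ] E₁}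

theorem inner_graph_restriction_symm (hcomm : i₀ ∘L S = T ∘L i₁)
    (hsym : ∀ ξ η, ⟪i₀ ξ, T η⟫ = ⟪T ξ, i₀ η⟫) (ξ η : E₂) :
    ⟪i₀ (i₁ ξ), i₀ (S η)⟫ + ⟪T (i₁ ξ), T (S η)⟫ =
      ⟪i₀ (S ξ), i₀ (i₁ η)⟫ + ⟪T (S ξ), T (i₁ η)⟫ := by
  have hcomm' (x : E₂) : i₀ (S x) = T (i₁ x) := congrArg (· x) hcomm
  rw [hcomm' η, hsym (i₁ ξ), ← hcomm' ξ, hsym (S ξ), hcomm' η]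

variable (hcomm : i₀ ∘L S = T ∘L i₁) (hreg : ∀ ξ η, i₀ η = T ξ → ∃ ζ, i₁ ζ = ξ)
  (hi₀ : Injective i₀)
include hcomm hreg hi₀

theorem range_restriction_eq_comap :
    LinearMap.range (S : E₂ →ₗ[ℝ] E₁) =
      (LinearMap.range (T : E₁ →ₗ[ℝ] E₀)).comap (i₀ : E₁ →ₗ[ℝ] E₀) := by
  have hcomm' (x : E₂) : i₀ (S x) = T (i₁ x) := congrArg (· x) hcomm
  ext η
  constructor
  · rintro ⟨ζ, rfl⟩
    exact ⟨i₁ ζ, (hcomm' ζ).symm⟩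
  · rintro ⟨ξ, hξ⟩
    obtain ⟨ζ, rfl⟩ := hreg ξ η hξ.symm
    exact ⟨ζ, hi₀ ((hcomm' ζ).trans hξ)⟩

theorem ker_eq_map_ker_restriction :
    LinearMap.ker (T : E₁ →ₗ[ℝ] E₀) =
      (LinearMap.ker (S : E₂ →ₗ[ℝ] E₁)).map (i₁ : E₂ →ₗ[ℝ] E₁) := by
  have hcomm' (x : E₂) : i₀ (S x) = T (i₁ x) := congrArg (· x) hcomm
  ext ξ
  constructor
  · intro hξ
    obtain ⟨ζ, rfl⟩ := hreg ξ 0 (by simpa using hξ.symm)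
    refine ⟨ζ, hi₀ ?_, rfl⟩
    simpa [hcomm'] using hξ
  · rintro ⟨ζ, hζ, rfl⟩
    simp_all [← hcomm']

theorem finrank_ker_restriction (hi₁ : Injective i₁) :
    finrank ℝ (LinearMap.ker (S : E₂ →ₗ[ℝ] E₁)) =
      finrank ℝ (LinearMap.ker (T : E₁ →ₗ[ℝ] E₀)) := by
  rw [ker_eq_map_ker_restriction hcomm hreg hi₀]
  exact (Submodule.equivMapOfInjective _ hi₁ _).finrank_eq

theorem finiteDimensional_ker_restriction (hi₁ : Injective i₁)
    [FiniteDimensional ℝ (LinearMap.ker (T : E₁ →ₗ[ℝ] E₀))] :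
    FiniteDimensional ℝ (LinearMap.ker (S : E₂ →ₗ[ℝ] E₁)) := by
  rw [ker_eq_map_ker_restriction hcomm hreg hi₀] at *
  exact (Submodule.equivMapOfInjective _ hi₁ _).symm.finiteDimensional

theorem isClosed_range_restriction
    (hT : IsClosed (LinearMap.range (T : E₁ →ₗ[ℝ] E₀) : Set E₀)) :
    IsClosed (LinearMap.range (S : E₂ →ₗ[ℝ] E₁) : Set E₁) := by
  rw [range_restriction_eq_comap hcomm hreg hi₀]
  exact hT.preimage i₀.continuous

theorem finrank_orthogonal_range_restriction [CompleteSpace E₀] [CompleteSpace E₁]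
    (hT : IsClosed (LinearMap.range (T : E₁ →ₗ[ℝ] E₀) : Set E₀)) (hd : DenseRange i₀) :
    finrank ℝ (LinearMap.range (S : E₂ →ₗ[ℝ] E₁))ᗮ =
      finrank ℝ (LinearMap.range (T : E₁ →ₗ[ℝ] E₀))ᗮ := by
  set V := LinearMap.range (T : E₁ →ₗ[ℝ] E₀)
  set W := LinearMap.range (S : E₂ →ₗ[ℝ] E₁)
  have : CompleteSpace V := hT.completeSpace_coe
  have : CompleteSpace W := (isClosed_range_restriction hcomm hreg hi₀ hT).completeSpace_coe
  let φ : E₁ →L[ℝ] Vᗮ := Vᗮ.orthogonalProjectionOnto ∘L i₀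
  have hker : LinearMap.ker (φ : E₁ →ₗ[ℝ] Vᗮ) = W := by
    ext x
    simp [φ, W, V, range_restriction_eq_comap hcomm hreg hi₀,
      Submodule.orthogonalProjectionOnto_eq_zero_iff, Submodule.orthogonal_orthogonal]
  have hdense : Dense (LinearMap.range (φ : E₁ →ₗ[ℝ] Vᗮ) : Set Vᗮ) := by
    have hP : DenseRange Vᗮ.orthogonalProjectionOnto := Surjective.denseRange fun v =>
      ⟨v, Vᗮ.orthogonalProjectionOnto_mem_subspace_eq_self v⟩
    rw [LinearMap.coe_range, ContinuousLinearMap.coe_coe, ContinuousLinearMap.coe_comp]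
    exact hP.comp hd Vᗮ.orthogonalProjectionOnto.continuous
  calc finrank ℝ Wᗮ = finrank ℝ (E₁ ⧸ W) :=
        W.quotientEquivOrthogonal.toLinearEquiv.finrank_eq.symm
    _ = finrank ℝ (LinearMap.range (φ : E₁ →ₗ[ℝ] Vᗮ)) := by
        rw [← hker]; exact (φ : E₁ →ₗ[ℝ] Vᗮ).quotKerEquivRange.finrank_eq
    _ = finrank ℝ Vᗮ := Submodule.finrank_eq_of_dense _ hdense

end Restriction

section Scale

variable {H : ℕ → Type*} [∀ k, NormedAddCommGroup (H k)] [∀ k, InnerProductSpace ℝ (H k)]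
  {incl : ∀ k, H (k + 1) →L[ℝ] H k}

theorem toBase_succ_apply (n : ℕ) (x : H (n + 1)) :
    toBase H incl (n + 1) x = incl 0 (toOne H incl n x) := by
  induction n with
  | zero => rfl
  | succ n ih => exact ih (incl (n + 1) x)

theorem toOne_succ_apply (n : ℕ) (x : H (n + 2)) :
    toOne H incl (n + 1) x = incl 1 (toTwo H incl n x) := by
  induction n with
  | zero => rfl
  | succ n ih => exact ih (incl (n + 2) x)

theorem IsScaleHilbert.denseRange_incl_zero (h : IsScaleHilbert H incl) : DenseRange (incl 0) :=
  (h.2.2 0).mono fun _ hx => Set.mem_iInter.mp hx 1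

namespace IsScaleHessian

variable {A : ∀ k, H (k + 2) →L[ℝ] H (k + 1)} {A₀ : H 1 →L[ℝ] H 0}

theorem exists_incl_one_eq (h : IsScaleHessian H incl A A₀) (ξ η : H 1)
    (hη : incl 0 η = A₀ ξ) : ∃ ζ, incl 1 ζ = ξ :=
  h.2.2.2.2.2.2 ξ 1 η hη

theorem regular_shift (h : IsScaleHessian H incl A A₀) (hinj : Injective (incl 1)) (ξ : H 2)
    (n : ℕ) (η : H (n + 1)) (hη : toOne H incl n η = A 0 ξ) :
    ∃ ζ : H (n + 2), toTwo H incl n ζ = ξ := by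
  have hbase : toBase H incl (n + 1) η = A₀ (incl 1 ξ) := by
    rw [toBase_succ_apply, hη]
    exact congrArg (· ξ) h.1
  obtain ⟨ζ, hζ⟩ := h.2.2.2.2.2.2 (incl 1 ξ) (n + 1) η hbase
  exact ⟨ζ, hinj (by rwa [← toOne_succ_apply])⟩

end IsScaleHessian

end Scale

/-- if `A` is a scale Hessian operator on the scale Hilbert space
`H = {H_k}`, then its restriction `A_1 : H_2 → H_1` is a scale Hessian operator
on the shifted scale Hilbert space `H¹ = {H_{k+1}}`: it is symmetric with
respect to the graph inner product
`⟨ξ,η⟩_A = ⟨ξ,η⟩₀ + ⟨A₀ξ, A₀η⟩₀` (which is equivalent to `⟨·,·⟩₁`),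
Fredholm of index 0 as a map `H_2 → H_1`, and satisfies the regularity axiom. -/
theorem stmt_18 (H : ℕ → Type*) [∀ k, NormedAddCommGroup (H k)]
    [∀ k, InnerProductSpace ℝ (H k)] [∀ k, CompleteSpace (H k)]
    (incl : ∀ k, H (k + 1) →L[ℝ] H k)
    (hscale : IsScaleHilbert H incl)
    (A : ∀ k, H (k + 2) →L[ℝ] H (k + 1)) (A₀ : H 1 →L[ℝ] H 0)
    (hhess : IsScaleHessian H incl A A₀) :
    -- the graph inner product on `H_1` is equivalent to `⟨·,·⟩₁`
    (∃ c C : ℝ, 0 < c ∧ 0 < C ∧ ∀ a : H 1,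
      c * ‖a‖ ^ 2 ≤ ‖incl 0 a‖ ^ 2 + ‖A₀ a‖ ^ 2 ∧
      ‖incl 0 a‖ ^ 2 + ‖A₀ a‖ ^ 2 ≤ C * ‖a‖ ^ 2) ∧
    -- `A_1` is symmetric with respect to the graph inner product
    (∀ ξ η : H 2,
      (⟪incl 0 (incl 1 ξ), incl 0 (A 0 η)⟫ + ⟪A₀ (incl 1 ξ), A₀ (A 0 η)⟫)
        = (⟪incl 0 (A 0 ξ), incl 0 (incl 1 η)⟫ + ⟪A₀ (A 0 ξ), A₀ (incl 1 η)⟫)) ∧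
    -- `A_1 : H_2 → H_1` is Fredholm of index 0
    FiniteDimensional ℝ (LinearMap.ker (A 0 : H 2 →ₗ[ℝ] H 1)) ∧
    IsClosed ((LinearMap.range (A 0 : H 2 →ₗ[ℝ] H 1) : Submodule ℝ (H 1)) : Set (H 1)) ∧
    (Module.finrank ℝ (LinearMap.ker (A 0 : H 2 →ₗ[ℝ] H 1)) =
      Module.finrank ℝ ((LinearMap.range (A 0 : H 2 →ₗ[ℝ] H 1))ᗮ : Submodule ℝ (H 1))) ∧
    -- `A_1` satisfies the regularity axiom on the shifted scale
    (∀ (ξ : H 2) (n : ℕ) (η : H (n + 1)), toOne H incl n η = A 0 ξ →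
      ∃ ζ : H (n + 2), toTwo H incl n ζ = ξ) := by
  have hdense := hscale.denseRange_incl_zero
  have hreg := hhess.exists_incl_one_eq
  have hshift := hhess.regular_shift
  obtain ⟨hinj, -, -⟩ := hscale
  obtain ⟨hcomm, -, hsym, hker, hran, hind, -⟩ := hhess
  refine ⟨exists_graph_norm_sq_equiv A₀ (incl 0) (hinj 0) hran,
    inner_graph_restriction_symm hcomm hsym,
    finiteDimensional_ker_restriction hcomm hreg (hinj 0) (hinj 1),
    isClosed_range_restriction hcomm hreg (hinj 0) hran, ?_, hshift (hinj 1)⟩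
  rw [finrank_ker_restriction hcomm hreg (hinj 0) (hinj 1), hind,
    finrank_orthogonal_range_restriction hcomm hreg (hinj 0) hran hdense]
end
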